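/- For the WARM cycle graph with n ≥ 3 edges, the eigenvalues of the Jacobian D(1/n,…,1/n) are λ_j = −1 + (α/2)(1 − cos(2πj/n)) for j = 0,…,n−1. Consequently, the equilibrium (1/n, …, 1/n) is linearly stable if and only if n is odd and α < 1/cos(π/(2n))², it is critical if and only if n is odd and α = 1/cos(π/(2n))², and if n is even it is linearly unstable for every α > 1 (since α − 1 is then an eigenvalue). -/

import Mathlib

/-!
At the barycentre every edge `{i, i + 1}` of the cycle contributes equally, so the Jacobian is
the symmetric tridiagonal circulant matrix with diagonal `-1 + α/2` and off-diagonal `-α/4`.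
Circulant matrices are diagonalised by the Fourier basis `(ζ ^ (i * l))ᵢ`, `ζ = exp (2πi/n)`,
which gives the eigenvalues `-1 + α/2 - (α/4)(ζ^l + ζ^(-l)) = -1 + (α/2)(1 - cos (2πl/n))`.
They are real, so the stability type is that of the largest one, attained at `l = ⌊n/2⌋`:
it is `α - 1` for even `n` and `-1 + α cos² (π/(2n))` for odd `n`.
-/

open Finset

noncomputable section

/-- Membership in the simplex `Δ`. -/
def InSimplex {ι : Type*} [Fintype ι] (v : ι → ℝ) : Prop :=
  (∀ i, 0 ≤ v i) ∧ ∑ i, v i = 1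

/-- A WARM weight: a probability distribution on the subsets of the colour set,
giving no mass to the empty set. -/
def IsWarmWeight {ι : Type*} [Fintype ι] [DecidableEq ι] (p : Finset ι → ℝ) : Prop :=
  p ∅ = 0 ∧ (∀ A, 0 ≤ p A ∧ p A ≤ 1) ∧ ∑ A : Finset ι, p A = 1

/-- The WARM vector field `F`. -/
def warmF {ι : Type*} [Fintype ι] [DecidableEq ι] (α : ℝ) (p : Finset ι → ℝ)
    (v : ι → ℝ) (i : ι) : ℝ :=
  -v i + ∑ A ∈ Finset.univ.filter (fun A : Finset ι => i ∈ A),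
      p A * v i ^ α / (∑ j ∈ A, v j ^ α)

/-- The Jacobian matrix `D(v)`. -/
def warmD {ι : Type*} [Fintype ι] [DecidableEq ι] (α : ℝ) (p : Finset ι → ℝ)
    (v : ι → ℝ) : Matrix ι ι ℝ :=
  Matrix.of fun i k =>
    if i = k then
      -1 + α * v i ^ (α - 1) *
        ∑ A ∈ Finset.univ.filter (fun A : Finset ι => i ∈ A),
          p A * ((∑ j ∈ A, v j ^ α) - v i ^ α) / (∑ j ∈ A, v j ^ α) ^ 2
    else
      -(α * v k ^ (α - 1) * v i ^ α *
        ∑ A ∈ Finset.univ.filter (fun A : Finset ι => i ∈ A ∧ k ∈ A),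
          p A / (∑ j ∈ A, v j ^ α) ^ 2)

/-- `μ ∈ ℂ` is an eigenvalue of the real matrix `M`, i.e. a root of its
characteristic polynomial. -/
def IsEigenvalue {ι : Type*} [Fintype ι] [DecidableEq ι] (M : Matrix ι ι ℝ) (μ : ℂ) : Prop :=
  (M.charpoly.map (algebraMap ℝ ℂ)).IsRoot μ

/-- Linear stability: every complex eigenvalue has negative real part. -/
def LinStable {ι : Type*} [Fintype ι] [DecidableEq ι] (M : Matrix ι ι ℝ) : Prop :=
  ∀ μ : ℂ, IsEigenvalue M μ → μ.re < 0

/-- Linear instability: some eigenvalue has positive real part. -/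
def LinUnstable {ι : Type*} [Fintype ι] [DecidableEq ι] (M : Matrix ι ι ℝ) : Prop :=
  ∃ μ : ℂ, IsEigenvalue M μ ∧ 0 < μ.re

/-- Critical: neither linearly stable nor linearly unstable. -/
def CriticalPt {ι : Type*} [Fintype ι] [DecidableEq ι] (M : Matrix ι ι ℝ) : Prop :=
  ¬ LinStable M ∧ ¬ LinUnstable M


/-- The WARM cycle graph weight on `n` edges: the `n` sets `{i, i+1 (mod n)}` each get
mass `1/n`. -/
def cycleP (n : ℕ) : Finset (Fin n) → ℝ :=
  fun A => if ∃ i : Fin n, A = {i, finRotate n i} then 1 / (n : ℝ) else 0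

open Matrix Polynomial Real

theorem IsPrimitiveRoot.pow_val_add {M : Type*} [CommMonoid M] {n : ℕ} [NeZero n] {ζ : M}
    (hζ : IsPrimitiveRoot ζ n) (i k : Fin n) :
    ζ ^ ((i + k : Fin n) : ℕ) = ζ ^ (i : ℕ) * ζ ^ (k : ℕ) := by
  rw [Fin.val_add, ← pow_add]
  simpa only [← hζ.eq_orderOf] using pow_mod_orderOf ζ (i + k : ℕ)

namespace Matrix

variable {R K : Type*} [CommRing R] [Field K] {n : ℕ}

theorem det_vandermonde_pow_ne_zero [IsDomain R] {ζ : R} (hζ : IsPrimitiveRoot ζ n) :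
    (vandermonde (fun i : Fin n => ζ ^ (i : ℕ))).det ≠ 0 :=
  det_vandermonde_ne_zero_iff.2 fun i j h => Fin.ext (hζ.pow_inj i.isLt j.isLt h)

variable [NeZero n]

/-- The eigenvalue of `circulant v` on the Fourier vector `(ζ ^ (i * l))ᵢ`. -/
def circulantEigenvalue (ζ : R) (v : Fin n → R) (l : Fin n) : R :=
  ∑ k, v (-k) * (ζ ^ (k : ℕ)) ^ (l : ℕ)

theorem circulant_mul_vandermonde {ζ : R} (hζ : IsPrimitiveRoot ζ n) (v : Fin n → R) :
    circulant v * vandermonde (fun i : Fin n => ζ ^ (i : ℕ)) =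
      vandermonde (fun i : Fin n => ζ ^ (i : ℕ)) * diagonal (circulantEigenvalue ζ v) := by
  ext i l
  rw [mul_diagonal, mul_apply, circulantEigenvalue, mul_sum,
    ← Equiv.sum_comp (Equiv.addLeft i)]
  refine sum_congr rfl fun k _ => ?_
  simp only [circulant_apply, vandermonde_apply, Equiv.coe_addLeft, sub_add_cancel_left,
    hζ.pow_val_add, mul_pow]
  ring

theorem charpoly_circulant {ζ : K} (hζ : IsPrimitiveRoot ζ n) (v : Fin n → K) :
    (circulant v).charpoly = ∏ l, (X - C (circulantEigenvalue ζ v l)) := by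
  set P := vandermonde (fun i : Fin n => ζ ^ (i : ℕ))
  have hP : IsUnit P.det := (det_vandermonde_pow_ne_zero hζ).isUnit
  have hconj : circulant v = P * diagonal (circulantEigenvalue ζ v) * P⁻¹ := by
    rw [← circulant_mul_vandermonde hζ, Matrix.mul_assoc, mul_nonsing_inv _ hP, Matrix.mul_one]
  rw [hconj, charpoly_mul_comm, ← Matrix.mul_assoc, nonsing_inv_mul _ hP, Matrix.one_mul,
    charpoly_diagonal]

end Matrix

open Complex in
theorem Complex.exp_two_pi_I_div_pow_add_inv (n l : ℕ) :
    exp (2 * π * I / n) ^ l + (exp (2 * π * I / n) ^ l)⁻¹ = 2 * Real.cos (2 * π * l / n) := by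
  have h : (l : ℂ) * (2 * π * I / n) = ((2 * π * l / n : ℝ) : ℂ) * I := by
    push_cast
    ring
  rw [← exp_nat_mul, ← exp_neg, h, ← neg_mul, ← two_cos, ofReal_cos]

theorem warmD_const {ι : Type*} [Fintype ι] [DecidableEq ι] (α : ℝ) (p : Finset ι → ℝ)
    {c : ℝ} (hc : 0 < c) :
    warmD α p (fun _ => c) = of fun i k =>
      if i = k then -1 + α / c * ∑ A ∈ univ.filter (fun A : Finset ι => i ∈ A),
        p A * ((#A - 1) / #A ^ 2)
      else -(α / c * ∑ A ∈ univ.filter (fun A : Finset ι => i ∈ A ∧ k ∈ A), p A / #A ^ 2) := by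
  have hcα : 0 < c ^ α := Real.rpow_pos_of_pos hc α
  ext i k
  simp only [warmD, of_apply, sum_const, nsmul_eq_mul, Real.rpow_sub_one hc.ne', mul_sum]
  split_ifs
  · congr 1
    refine sum_congr rfl fun A hA => ?_
    have hA₀ : (0 : ℝ) < #A := by simpa using ⟨i, (mem_filter.1 hA).2⟩
    field_simp
  · congr 1
    refine sum_congr rfl fun A hA => ?_
    have hA₀ : (0 : ℝ) < #A := by simpa using ⟨i, (mem_filter.1 hA).2.1⟩
    field_simp

theorem Fin.one_ne_zero_and_one_add_one_ne_zero {n : ℕ} [NeZero n] (hn : 3 ≤ n) :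
    (1 : Fin n) ≠ 0 ∧ (1 : Fin n) + 1 ≠ 0 := by
  simp only [Ne, Fin.ext_iff, Fin.val_add, Fin.val_one', Fin.val_zero,
    Nat.mod_eq_of_lt (by omega : 1 < n), Nat.mod_eq_of_lt (by omega : 2 < n)]
  omega

def cycleEigenvalue (n : ℕ) (α : ℝ) (j : ℕ) : ℝ :=
  -1 + α / 2 * (1 - cos (2 * π * j / n))

section CycleGraph

open Fin.CommRing

variable {n : ℕ} [NeZero n]

def cycleEdge (k : Fin n) : Finset (Fin n) := {k, k + 1}

theorem mem_cycleEdge {i k : Fin n} : i ∈ cycleEdge k ↔ i = k ∨ i = k + 1 := by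
  simp [cycleEdge]

theorem card_cycleEdge (hn : 3 ≤ n) (k : Fin n) : #(cycleEdge k) = 2 :=
  card_pair fun h => (Fin.one_ne_zero_and_one_add_one_ne_zero hn).1 (by linear_combination -h)

theorem cycleEdge_injective (hn : 3 ≤ n) : Function.Injective (cycleEdge (n := n)) := by
  intro k l h
  have hk : k ∈ cycleEdge l := h ▸ mem_cycleEdge.2 (Or.inl rfl)
  have hl : l ∈ cycleEdge k := h ▸ mem_cycleEdge.2 (Or.inl rfl)
  rw [mem_cycleEdge] at hk hl
  rcases hk with hk | hk
  · exact hk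
  rcases hl with hl | hl
  · exact hl.symm
  · exact absurd (by linear_combination -(hk + hl)) (Fin.one_ne_zero_and_one_add_one_ne_zero hn).2

theorem sum_filter_cycleP_mul (hn : 3 ≤ n) (Q : Finset (Fin n) → Prop) [DecidablePred Q]
    (g : Finset (Fin n) → ℝ) :
    ∑ A ∈ univ.filter Q, cycleP n A * g A =
      (∑ k ∈ univ.filter (fun k => Q (cycleEdge k)), g (cycleEdge k)) / n := by
  have hsupp : ∀ A ∈ univ.filter Q, A ∉ (univ.image cycleEdge).filter Q →
      cycleP n A * g A = 0 := by
    intro A hA hA'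
    rw [cycleP, if_neg, zero_mul]
    rintro ⟨k, rfl⟩
    refine hA' (mem_filter.2 ⟨mem_image.2 ⟨k, mem_univ k, ?_⟩, (mem_filter.1 hA).2⟩)
    rw [cycleEdge, finRotate_apply]
  rw [← sum_subset (filter_subset_filter _ (subset_univ _)) hsupp, filter_image,
    sum_image fun k _ l _ h => cycleEdge_injective hn h, sum_div]
  refine sum_congr rfl fun k _ => ?_
  rw [cycleP, if_pos ⟨k, by rw [cycleEdge, finRotate_apply]⟩]
  ring

theorem card_filter_mem_cycleEdge (hn : 3 ≤ n) (i : Fin n) :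
    #(univ.filter fun k => i ∈ cycleEdge k) = 2 := by
  obtain ⟨h₁, h₂⟩ := Fin.one_ne_zero_and_one_add_one_ne_zero hn
  have hfilter : univ.filter (fun k => i ∈ cycleEdge k) = {i - 1, i} := by
    ext k
    simp only [mem_filter, mem_univ, true_and, mem_cycleEdge, mem_insert, mem_singleton]
    grind
  rw [hfilter, card_pair fun h => h₁ (by linear_combination -h)]

theorem card_filter_mem_cycleEdge_and_mem (hn : 3 ≤ n) {i k : Fin n} (hik : i ≠ k) :
    #(univ.filter fun e => i ∈ cycleEdge e ∧ k ∈ cycleEdge e) =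
      if i - k = 1 ∨ i - k = -1 then 1 else 0 := by
  obtain ⟨h₁, h₂⟩ := Fin.one_ne_zero_and_one_add_one_ne_zero hn
  simp only [mem_cycleEdge]
  split_ifs with hadj
  · rw [card_eq_one]
    rcases hadj with h | h
    · exact ⟨k, by ext e; simp only [mem_filter, mem_univ, true_and, mem_singleton]; grind⟩
    · exact ⟨i, by ext e; simp only [mem_filter, mem_univ, true_and, mem_singleton]; grind⟩
  · rw [card_eq_zero, filter_eq_empty_iff]
    grind

def cycleJacobianColumn (α : ℝ) (d : Fin n) : ℝ :=
  if d = 0 then -1 + α / 2 else if d = 1 ∨ d = -1 then -(α / 4) else 0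

theorem warmD_cycleP_barycentre (hn : 3 ≤ n) (α : ℝ) :
    warmD α (cycleP n) (fun _ => 1 / (n : ℝ)) = circulant (cycleJacobianColumn α) := by
  have hn0 : (n : ℝ) ≠ 0 := by positivity
  rw [warmD_const α _ (by positivity)]
  ext i k
  simp only [of_apply, circulant_apply, cycleJacobianColumn, sub_eq_zero, div_eq_mul_inv (cycleP n _),
    sum_filter_cycleP_mul hn, card_cycleEdge hn, sum_const, nsmul_eq_mul]
  split_ifs with hik hadj
  · rw [card_filter_mem_cycleEdge hn]
    field_simp
    ring
  · rw [card_filter_mem_cycleEdge_and_mem hn hik, if_pos hadj]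
    field_simp
    ring
  · rw [card_filter_mem_cycleEdge_and_mem hn hik, if_neg hadj]
    simp

theorem circulantEigenvalue_cycleJacobianColumn (hn : 3 ≤ n) (α : ℝ) {ζ : ℂ}
    (hζ : IsPrimitiveRoot ζ n) (l : Fin n) :
    circulantEigenvalue ζ (fun d => (cycleJacobianColumn α d : ℂ)) l =
      (-1 + α / 2 : ℝ) - (α / 4 : ℝ) * (ζ ^ (l : ℕ) + (ζ ^ (l : ℕ))⁻¹) := by
  obtain ⟨h₁, h₂⟩ := Fin.one_ne_zero_and_one_add_one_ne_zero hn
  have hne₁ : (0 : Fin n) ≠ 1 := h₁.symm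
  have hne₂ : (0 : Fin n) ≠ -1 := fun h => h₁ (by linear_combination h)
  have hne₃ : (1 : Fin n) ≠ -1 := fun h => h₂ (by linear_combination h)
  have hval₁ : ((1 : Fin n) : ℕ) = 1 := by rw [Fin.val_one', Nat.mod_eq_of_lt (by omega)]
  have hinv : ζ ^ ((-1 : Fin n) : ℕ) = ζ⁻¹ := by
    have h := hζ.pow_val_add (-1) 1
    rw [neg_add_cancel, Fin.val_zero, pow_zero, hval₁, pow_one] at h
    exact eq_inv_of_mul_eq_one_left h.symm
  have hsupp : ∀ k ∈ univ, k ∉ ({0, 1, -1} : Finset (Fin n)) →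
      (cycleJacobianColumn α (-k) : ℂ) * (ζ ^ (k : ℕ)) ^ (l : ℕ) = 0 := by
    intro k _ hk
    simp only [mem_insert, mem_singleton, not_or] at hk
    simp [cycleJacobianColumn, neg_eq_iff_eq_neg, hk.1, hk.2.1, hk.2.2]
  rw [circulantEigenvalue, ← sum_subset (subset_univ _) hsupp, sum_insert (by simp [hne₁, hne₂]),
    sum_pair hne₃, hval₁, hinv, pow_one]
  simp [cycleJacobianColumn, h₁, hne₃.symm]
  ring

theorem isEigenvalue_warmD_cycleP_barycentre_iff (hn : 3 ≤ n) (α : ℝ) (μ : ℂ) :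
    IsEigenvalue (warmD α (cycleP n) (fun _ => 1 / (n : ℝ))) μ ↔
      ∃ j : Fin n, μ = cycleEigenvalue n α j := by
  have hζ := Complex.isPrimitiveRoot_exp n (NeZero.ne n)
  rw [IsEigenvalue, warmD_cycleP_barycentre hn, ← charpoly_map, map_circulant,
    Complex.coe_algebraMap, charpoly_circulant hζ, IsRoot.def, eval_prod, prod_eq_zero_iff]
  simp only [mem_univ, true_and, eval_sub, eval_X, eval_C, sub_eq_zero,
    circulantEigenvalue_cycleJacobianColumn hn α hζ, Complex.exp_two_pi_I_div_pow_add_inv]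
  refine exists_congr fun j => iff_of_eq (congrArg (μ = ·) ?_)
  push_cast [cycleEigenvalue]
  ring

end CycleGraph

section CycleEigenvalue

variable {n : ℕ} {α : ℝ}

theorem cycleEigenvalue_le_sub_one (hα : 0 ≤ α) (j : ℕ) : cycleEigenvalue n α j ≤ α - 1 := by
  have := neg_one_le_cos (2 * π * j / n)
  rw [cycleEigenvalue]
  nlinarith

theorem cycleEigenvalue_div_two_of_even (hn : Even n) (hn₀ : n ≠ 0) :
    cycleEigenvalue n α (n / 2) = α - 1 := by
  have hn₀' : (n : ℝ) ≠ 0 := by exact_mod_cast hn₀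
  have hangle : 2 * π * (n / 2 : ℕ) / n = π := by
    rw [Nat.cast_div hn.two_dvd two_ne_zero]
    field_simp
    norm_num
  rw [cycleEigenvalue, hangle, cos_pi]
  ring

theorem Real.neg_cos_pi_div_le_cos_two_pi_mul_div (hn : Odd n) {j : ℕ} (hj : j ≤ n) :
    -cos (π / n) ≤ cos (2 * π * j / n) := by
  have hn₀ : (0 : ℝ) < n := by exact_mod_cast hn.pos
  have key : ∀ t : ℕ, 2 * t < n → -cos (π / n) ≤ cos (2 * π * t / n) := by
    intro t ht
    have ht' : 2 * (t : ℝ) + 1 ≤ n := by exact_mod_cast ht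
    rw [← cos_pi_sub]
    have hπn : 0 ≤ π / n := by positivity
    apply cos_le_cos_of_nonneg_of_le_pi (by positivity) (by linarith)
    rw [div_le_iff₀ hn₀, sub_mul, div_mul_cancel₀ _ hn₀.ne']
    nlinarith [pi_pos]
  -- `2 * j = n` is impossible for odd `n`, so `j` or its reflection `n - j` lies below `n / 2`.
  rcases lt_or_ge (2 * j) n with h | h
  · exact key j h
  · have h' : 2 * (n - j) < n := by
      obtain ⟨k, rfl⟩ := hn
      omega
    have hreflect : 2 * π * j / n = 2 * π - 2 * π * (n - j : ℕ) / n := by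
      rw [Nat.cast_sub hj]
      field_simp
      ring
    rw [hreflect, cos_two_pi_sub]
    exact key _ h'

theorem Real.cos_sq_pi_div_two_mul (n : ℕ) : cos (π / (2 * n)) ^ 2 = (1 + cos (π / n)) / 2 := by
  rw [cos_sq, show 2 * (π / (2 * n)) = π / n by ring]
  ring

theorem Real.cos_sq_pi_div_two_mul_pos (hn : 2 ≤ n) : 0 < cos (π / (2 * n)) ^ 2 := by
  have hlt : π / (2 * n) < π / 2 := div_lt_div_of_pos_left pi_pos two_pos (by norm_cast; omega)
  have hpos : 0 < π / (2 * n) := by positivity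
  exact pow_pos (cos_pos_of_mem_Ioo ⟨by linarith, hlt⟩) 2

theorem cycleEigenvalue_le_of_odd (hn : Odd n) (hα : 0 ≤ α) {j : ℕ} (hj : j ≤ n) :
    cycleEigenvalue n α j ≤ -1 + α * cos (π / (2 * n)) ^ 2 := by
  have := mul_le_mul_of_nonneg_left (Real.neg_cos_pi_div_le_cos_two_pi_mul_div hn hj) hα
  rw [cycleEigenvalue, Real.cos_sq_pi_div_two_mul]
  linarith

theorem cycleEigenvalue_div_two_of_odd (hn : Odd n) :
    cycleEigenvalue n α (n / 2) = -1 + α * cos (π / (2 * n)) ^ 2 := by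
  obtain ⟨k, rfl⟩ := hn
  have hangle : 2 * π * ((2 * k + 1) / 2 : ℕ) / (2 * k + 1 : ℕ) = π - π / (2 * k + 1 : ℕ) := by
    rw [show (2 * k + 1) / 2 = k by omega]
    field_simp
    push_cast
    ring
  rw [cycleEigenvalue, hangle, cos_pi_sub, Real.cos_sq_pi_div_two_mul]
  ring

end CycleEigenvalue

section SpectralStability

variable {ι κ : Type*} [Fintype ι] [DecidableEq ι] {M : Matrix ι ι ℝ} {f : κ → ℝ} {j₀ : κ}

theorem linStable_iff_of_forall_le (hM : ∀ μ, IsEigenvalue M μ ↔ ∃ j, μ = f j)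
    (hmax : ∀ j, f j ≤ f j₀) : LinStable M ↔ f j₀ < 0 := by
  refine ⟨fun h => by simpa using h _ ((hM _).2 ⟨j₀, rfl⟩), fun h μ hμ => ?_⟩
  obtain ⟨j, rfl⟩ := (hM μ).1 hμ
  simpa using (hmax j).trans_lt h

theorem linUnstable_iff_of_forall_le (hM : ∀ μ, IsEigenvalue M μ ↔ ∃ j, μ = f j)
    (hmax : ∀ j, f j ≤ f j₀) : LinUnstable M ↔ 0 < f j₀ := by
  refine ⟨fun ⟨μ, hμ, hre⟩ => ?_, fun h => ⟨f j₀, (hM _).2 ⟨j₀, rfl⟩, by simpa using h⟩⟩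
  obtain ⟨j, rfl⟩ := (hM μ).1 hμ
  exact (by simpa using hre : 0 < f j).trans_le (hmax j)

theorem criticalPt_iff_of_forall_le (hM : ∀ μ, IsEigenvalue M μ ↔ ∃ j, μ = f j)
    (hmax : ∀ j, f j ≤ f j₀) : CriticalPt M ↔ f j₀ = 0 := by
  rw [CriticalPt, linStable_iff_of_forall_le hM hmax, linUnstable_iff_of_forall_le hM hmax]
  constructor
  · rintro ⟨h₁, h₂⟩
    linarith [not_lt.1 h₁, not_lt.1 h₂]
  · intro h
    simp [h]

end SpectralStability

/-- **Stability of `1/n` for the WARM cycle graph.**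
The eigenvalues of the Jacobian at the barycentre are
`λ_j = −1 + (α/2)(1 − cos(2πj/n))`, `j = 0,…,n−1`; the barycentre is linearly stable
iff `n` is odd and `α < cos(π/(2n))⁻²`, critical iff `n` is odd with equality, and for
even `n` it is linearly unstable (with `α − 1` an eigenvalue). -/
theorem cycle_barycentre_stability (n : ℕ) (hn : 3 ≤ n) (α : ℝ) (hα : 1 < α) :
    (∀ μ : ℂ, IsEigenvalue (warmD α (cycleP n) (fun _ => 1 / (n : ℝ))) μ ↔
      ∃ j : Fin n, μ =
        ((-1 + α / 2 * (1 - Real.cos (2 * Real.pi * ((j : ℕ) : ℝ) / (n : ℝ))) : ℝ) : ℂ)) ∧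
    (LinStable (warmD α (cycleP n) (fun _ => 1 / (n : ℝ))) ↔
      Odd n ∧ α < 1 / Real.cos (Real.pi / (2 * (n : ℝ))) ^ 2) ∧
    (CriticalPt (warmD α (cycleP n) (fun _ => 1 / (n : ℝ))) ↔
      Odd n ∧ α = 1 / Real.cos (Real.pi / (2 * (n : ℝ))) ^ 2) ∧
    (Even n →
      IsEigenvalue (warmD α (cycleP n) (fun _ => 1 / (n : ℝ))) ((α - 1 : ℝ) : ℂ) ∧
      LinUnstable (warmD α (cycleP n) (fun _ => 1 / (n : ℝ)))) := by
  have : NeZero n := ⟨by omega⟩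
  have heig := isEigenvalue_warmD_cycleP_barycentre_iff hn α
  let j₀ : Fin n := ⟨n / 2, Nat.div_lt_self (by omega) one_lt_two⟩
  refine ⟨heig, ?_⟩
  rcases Nat.even_or_odd n with hev | hodd
  · have hj₀ : cycleEigenvalue n α j₀ = α - 1 := cycleEigenvalue_div_two_of_even hev (by omega)
    have hmax : ∀ j : Fin n, cycleEigenvalue n α j ≤ cycleEigenvalue n α j₀ :=
      fun j => hj₀ ▸ cycleEigenvalue_le_sub_one (by linarith) j
    rw [linStable_iff_of_forall_le heig hmax, criticalPt_iff_of_forall_le heig hmax,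
      linUnstable_iff_of_forall_le heig hmax, hj₀]
    have hnodd : ¬ Odd n := Nat.not_odd_iff_even.2 hev
    refine ⟨by simp [hnodd]; linarith, by simp [hnodd]; linarith,
      fun _ => ⟨(heig _).2 ⟨j₀, by rw [hj₀]⟩, by linarith⟩⟩
  · have hj₀ := cycleEigenvalue_div_two_of_odd (α := α) hodd
    have hmax : ∀ j : Fin n, cycleEigenvalue n α j ≤ cycleEigenvalue n α j₀ :=
      fun j => hj₀ ▸ cycleEigenvalue_le_of_odd hodd (by linarith) j.isLt.le
    have hcos := Real.cos_sq_pi_div_two_mul_pos (n := n) (by omega)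
    rw [linStable_iff_of_forall_le heig hmax, criticalPt_iff_of_forall_le heig hmax, hj₀,
      lt_div_iff₀ hcos, eq_div_iff hcos.ne']
    refine ⟨⟨fun h => ⟨hodd, by linarith⟩, fun h => by linarith [h.2]⟩,
      ⟨fun h => ⟨hodd, by linarith⟩, fun h => by linarith [h.2]⟩,
      fun hev => absurd hodd (Nat.not_odd_iff_even.2 hev)⟩

end
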